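/- arXiv:1008.3716 — 2 statements merged into one kernel-verified Lean document; each statement's English description precedes it below -/
import Mathlib

section
/- Let y_F be the linear chain with nearest-neighbor spacing Fε, let α > 0, and suppose γ₂ := min{ φ''(F) + 4 φ''(2F), (φ'(F) + 2 φ'(2F))/F } > 0. Given f ∈ 𝒰, let u^{a,b}, u^{CB,b} ∈ 𝒰 satisfy δ(E^a+E^b)(y_F)[v] + δ²(E^a+E^b)(y_F)[u^{a,b}, v] = ⟨f, v⟩ and δ(E^CB+E^b)(y_F)[v] + δ²(E^CB+E^b)(y_F)[u^{CB,b}, v] = ⟨f, v⟩, respectively, for all v ∈ 𝒰. Then ‖(u^{a,b} − u^{CB,b})'‖_{ℓ²_ε} ≤ (ε² max{ |φ''(2F)|, |φ'(2F)/(2F)| } / γ₂) ‖(u^{a,b})'''‖_{ℓ²_ε}. -/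
noncomputable section

open Real Finset

/-- Euclidean norm on `ℝ × ℝ`. -/
def enorm2 (v : ℝ × ℝ) : ℝ := Real.sqrt (v.1 ^ 2 + v.2 ^ 2)

/-- Euclidean dot product on `ℝ × ℝ`. -/
def edot (v w : ℝ × ℝ) : ℝ := v.1 * w.1 + v.2 * w.2

/-- `N`-periodic mean-zero displacements (the space `𝒰`). -/
def IsDisp (N : ℕ) (u : ℤ → ℝ × ℝ) : Prop :=
  (∀ ℓ : ℤ, u (ℓ + (N : ℤ)) = u ℓ) ∧ ∑ ℓ ∈ Finset.Icc (1 : ℤ) (N : ℤ), u ℓ = 0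

/-- Constrained displacements (the space `𝒰̃`): second component vanishes. -/
def IsDisp1D (N : ℕ) (u : ℤ → ℝ × ℝ) : Prop :=
  IsDisp N u ∧ ∀ ℓ : ℤ, (u ℓ).2 = 0

/-- Backward difference `u'_ℓ = (u_ℓ - u_{ℓ-1})/ε`. -/
def bd (ε : ℝ) (u : ℤ → ℝ × ℝ) (ℓ : ℤ) : ℝ × ℝ := ε⁻¹ • (u ℓ - u (ℓ - 1))

/-- The inner product `⟨v,w⟩ = ε ∑_{ℓ=1}^N v_ℓ · w_ℓ`. -/
def ip (N : ℕ) (ε : ℝ) (v w : ℤ → ℝ × ℝ) : ℝ :=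
  ε * ∑ ℓ ∈ Finset.Icc (1 : ℤ) (N : ℤ), edot (v ℓ) (w ℓ)

/-- The norm `‖v‖_{ℓ²_ε}`. -/
def nrm (N : ℕ) (ε : ℝ) (v : ℤ → ℝ × ℝ) : ℝ :=
  Real.sqrt (ε * ∑ ℓ ∈ Finset.Icc (1 : ℤ) (N : ℤ), (enorm2 (v ℓ)) ^ 2)

/-- The atomistic energy `E^a`. -/
def Ea (N : ℕ) (ε : ℝ) (φ : ℝ → ℝ) (y : ℤ → ℝ × ℝ) : ℝ :=
  ε * ∑ ℓ ∈ Finset.Icc (1 : ℤ) (N : ℤ),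
    (φ (enorm2 (bd ε y ℓ)) + φ (enorm2 (bd ε y (ℓ + 1) + bd ε y ℓ)))

/-- The Cauchy–Born energy `E^CB`. -/
def ECB (N : ℕ) (ε : ℝ) (φ : ℝ → ℝ) (y : ℤ → ℝ × ℝ) : ℝ :=
  ε * ∑ ℓ ∈ Finset.Icc (1 : ℤ) (N : ℤ),
    (φ (enorm2 (bd ε y ℓ)) + φ (2 * enorm2 (bd ε y ℓ)))

/-- The bond-angle energy `E^b`. -/
def Eb (N : ℕ) (ε α : ℝ) (y : ℤ → ℝ × ℝ) : ℝ :=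
  ε * ∑ ℓ ∈ Finset.Icc (1 : ℤ) (N : ℤ),
    α * (1 - edot (bd ε y (ℓ + 1)) (bd ε y ℓ) /
      (enorm2 (bd ε y (ℓ + 1)) * enorm2 (bd ε y ℓ)))

/-- The quasi-nonlocal energy `E^QNL`. -/
def EQNL (N K : ℕ) (ε : ℝ) (φ : ℝ → ℝ) (y : ℤ → ℝ × ℝ) : ℝ :=
  ε * ∑ ℓ ∈ Finset.Icc (1 : ℤ) (N : ℤ), φ (enorm2 (bd ε y ℓ))
  + ε * ∑ ℓ ∈ Finset.Icc (1 : ℤ) (K : ℤ), φ (enorm2 (bd ε y (ℓ + 1) + bd ε y ℓ))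
  + ε * ∑ ℓ ∈ Finset.Icc ((K : ℤ) + 2) (N : ℤ), φ (2 * enorm2 (bd ε y ℓ))
  + ε / 2 * φ (2 * enorm2 (bd ε y 1)) + ε / 2 * φ (2 * enorm2 (bd ε y ((K : ℤ) + 1)))

/-- First variation `δE(y)[u] = (d/dt) E(y + t u) |_{t=0}`. -/
def dE (E : (ℤ → ℝ × ℝ) → ℝ) (y u : ℤ → ℝ × ℝ) : ℝ :=
  deriv (fun t : ℝ => E (fun ℓ => y ℓ + t • u ℓ)) 0

/-- Second variation `δ²E(y)[u,v] = (∂²/∂t∂s) E(y + t u + s v) |_{t=s=0}`. -/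
def d2E (E : (ℤ → ℝ × ℝ) → ℝ) (y u v : ℤ → ℝ × ℝ) : ℝ :=
  deriv (fun s : ℝ => deriv (fun t : ℝ => E (fun ℓ => y ℓ + t • u ℓ + s • v ℓ)) 0) 0

/-- The linear chain `y_{F,ℓ} = (Fεℓ, 0)`. -/
def yLin (ε F : ℝ) : ℤ → ℝ × ℝ := fun ℓ => (F * ε * ℓ, 0)

/-- The uniform circular chain of radius `R = Fε/(2 sin(πε))`. -/
def yCirc (ε F : ℝ) : ℤ → ℝ × ℝ := fun ℓ =>
  (F * ε / (2 * Real.sin (π * ε)) * Real.cos (2 * π * ε * ℓ),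
   F * ε / (2 * Real.sin (π * ε)) * Real.sin (2 * π * ε * ℓ))


/-!
At the linear chain every site energy is differentiated along lines, which makes both second
variations explicit diagonal bilinear forms in the strains `u'_ℓ`; the bond-angle parts of the
two models coincide. Put `w = u^{a,b} - u^{CB,b}`. The first variations of the two models agree
on periodic displacements, so the two equations give
`δ²(E^CB+E^b)[w, w] = δ²(E^CB+E^b)[u^{a,b}, w] - δ²(E^a+E^b)[u^{a,b}, w]`.
The left side is at least `γ₂ ‖w'‖²`. On the right only the next-nearest-neighbour terms differ,
by a discrete second difference, and two periodic summations by parts turn it into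
`-ε³ ∑ H(u'''_{ℓ+1}, w'_ℓ)`, where `H` is the Hessian of `v ↦ φ ‖v‖` at `(2F, 0)`;
Cauchy–Schwarz bounds this by `ε² max{|φ''(2F)|, |φ'(2F)/(2F)|} ‖u'''‖ ‖w'‖`.
-/

open Function Filter Topology

section PeriodicSums

variable {N : ℕ} {ε : ℝ}

theorem Function.Periodic.sum_Icc_add_one {M : Type*} [AddCommMonoid M] {g : ℤ → M}
    (hg : Periodic g (N : ℤ)) :
    ∑ ℓ ∈ Icc (1 : ℤ) N, g (ℓ + 1) = ∑ ℓ ∈ Icc (1 : ℤ) N, g ℓ := by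
  rcases N.eq_zero_or_pos with rfl | hN
  · simp
  have hmap := Finset.sum_map (Icc (1 : ℤ) N) (addRightEmbedding 1) g
  rw [map_add_right_Icc] at hmap
  rw [show ∑ ℓ ∈ Icc (1 : ℤ) N, g (ℓ + 1) = _ from hmap.symm,
    ← insert_Icc_add_one_left_eq_Icc (by omega : (1 : ℤ) ≤ N),
    ← insert_Icc_right_eq_Icc_add_one (by omega : (1 : ℤ) + 1 ≤ N + 1),
    sum_insert (by simp), sum_insert (by simp), add_comm (N : ℤ) 1, hg 1]

theorem bd_fun_sub (u v : ℤ → ℝ × ℝ) (ℓ : ℤ) :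
    bd ε (fun m => u m - v m) ℓ = bd ε u ℓ - bd ε v ℓ := by
  simp only [bd, ← smul_sub]
  abel_nf

theorem Function.Periodic.bd {u : ℤ → ℝ × ℝ} (hu : Periodic u (N : ℤ)) :
    Periodic (bd ε u) (N : ℤ) := fun ℓ => by
  rw [_root_.bd, _root_.bd, add_sub_right_comm, hu, hu]

theorem smul_bd (hε : ε ≠ 0) (u : ℤ → ℝ × ℝ) (ℓ : ℤ) : ε • bd ε u ℓ = u ℓ - u (ℓ - 1) := by
  rw [bd, smul_smul, mul_inv_cancel₀ hε, one_smul]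

theorem sum_bilin_bd (B : LinearMap.BilinForm ℝ (ℝ × ℝ)) (hε : ε ≠ 0) {X y : ℤ → ℝ × ℝ}
    (hX : Periodic X (N : ℤ)) (hy : Periodic y (N : ℤ)) :
    ∑ ℓ ∈ Icc (1 : ℤ) N, B (X ℓ) (bd ε y ℓ) =
      -∑ ℓ ∈ Icc (1 : ℤ) N, B (bd ε X (ℓ + 1)) (y ℓ) := by
  have hshift : ∑ ℓ ∈ Icc (1 : ℤ) N, B (X (ℓ + 1)) (y ℓ) =
      ∑ ℓ ∈ Icc (1 : ℤ) N, B (X ℓ) (y (ℓ - 1)) := by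
    simpa using Periodic.sum_Icc_add_one (g := fun ℓ => B (X ℓ) (y (ℓ - 1)))
      (fun ℓ => by simp only [add_sub_right_comm ℓ, hX ℓ, hy (ℓ - 1)])
  refine mul_left_cancel₀ hε ?_
  calc ε * ∑ ℓ ∈ Icc (1 : ℤ) N, B (X ℓ) (bd ε y ℓ)
      = ∑ ℓ ∈ Icc (1 : ℤ) N, (B (X ℓ) (y ℓ) - B (X ℓ) (y (ℓ - 1))) := by
        rw [mul_sum]
        refine sum_congr rfl fun ℓ _ => ?_
        rw [← smul_eq_mul, ← map_smul, smul_bd hε, map_sub]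
    _ = -∑ ℓ ∈ Icc (1 : ℤ) N, (B (X (ℓ + 1)) (y ℓ) - B (X ℓ) (y ℓ)) := by
        rw [sum_sub_distrib, sum_sub_distrib, hshift, neg_sub]
    _ = ε * -∑ ℓ ∈ Icc (1 : ℤ) N, B (bd ε X (ℓ + 1)) (y ℓ) := by
        rw [mul_neg, mul_sum]
        refine congrArg _ (sum_congr rfl fun ℓ _ => ?_)
        rw [← smul_eq_mul, ← LinearMap.smul_apply, ← map_smul, smul_bd hε, add_sub_cancel_right,
          map_sub, LinearMap.sub_apply]

/-- Pointwise the difference is `ε² B(u''_{ℓ+1}, v''_{ℓ+1})` up to a telescoping term; one more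
summation by parts moves a derivative from `v` onto `u`. -/
theorem sum_bilin_two_smul_sub_bilin_add (B : LinearMap.BilinForm ℝ (ℝ × ℝ)) (hε : ε ≠ 0)
    {u v : ℤ → ℝ × ℝ} (hu : Periodic u (N : ℤ)) (hv : Periodic v (N : ℤ)) :
    ∑ ℓ ∈ Icc (1 : ℤ) N, (B ((2 : ℝ) • bd ε u ℓ) ((2 : ℝ) • bd ε v ℓ) -
        B (bd ε u (ℓ + 1) + bd ε u ℓ) (bd ε v (ℓ + 1) + bd ε v ℓ)) =
      -ε ^ 2 * ∑ ℓ ∈ Icc (1 : ℤ) N, B (bd ε (bd ε (bd ε u)) (ℓ + 1)) (bd ε v ℓ) := by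
  set x := bd ε u
  set y := bd ε v
  have hx : Periodic x N := hu.bd
  have hy : Periodic y N := hv.bd
  have hpt : ∀ ℓ, B ((2 : ℝ) • x ℓ) ((2 : ℝ) • y ℓ) - B (x (ℓ + 1) + x ℓ) (y (ℓ + 1) + y ℓ) =
      ε ^ 2 * B (bd ε x (ℓ + 1)) (bd ε y (ℓ + 1)) +
        2 * (B (x ℓ) (y ℓ) - B (x (ℓ + 1)) (y (ℓ + 1))) := by
    intro ℓ
    have hx' : x (ℓ + 1) = x ℓ + ε • bd ε x (ℓ + 1) := by
      rw [smul_bd hε, add_sub_cancel_right]; abel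
    have hy' : y (ℓ + 1) = y ℓ + ε • bd ε y (ℓ + 1) := by
      rw [smul_bd hε, add_sub_cancel_right]; abel
    rw [hx', hy']
    simp only [map_add, map_smul, LinearMap.add_apply, LinearMap.smul_apply, smul_eq_mul]
    ring
  have hxy : ∑ ℓ ∈ Icc (1 : ℤ) N, B (x (ℓ + 1)) (y (ℓ + 1)) =
      ∑ ℓ ∈ Icc (1 : ℤ) N, B (x ℓ) (y ℓ) :=
    Periodic.sum_Icc_add_one (g := fun ℓ => B (x ℓ) (y ℓ)) fun ℓ => by simp only [hx ℓ, hy ℓ]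
  have hxy' : ∑ ℓ ∈ Icc (1 : ℤ) N, B (bd ε x (ℓ + 1)) (bd ε y (ℓ + 1)) =
      ∑ ℓ ∈ Icc (1 : ℤ) N, B (bd ε x ℓ) (bd ε y ℓ) :=
    Periodic.sum_Icc_add_one (g := fun ℓ => B (bd ε x ℓ) (bd ε y ℓ))
      fun ℓ => by simp only [hx.bd ℓ, hy.bd ℓ]
  rw [sum_congr rfl fun ℓ _ => hpt ℓ, sum_add_distrib, ← mul_sum, ← mul_sum, sum_sub_distrib,
    hxy, hxy', sum_bilin_bd B hε hx.bd hy]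
  ring

end PeriodicSums

section Euclidean

theorem enorm2_eq_sqrt_edot (v : ℝ × ℝ) : enorm2 v = √(edot v v) := by
  simp only [enorm2, edot, sq]

theorem enorm2_sq (v : ℝ × ℝ) : enorm2 v ^ 2 = v.1 ^ 2 + v.2 ^ 2 :=
  Real.sq_sqrt (by positivity)

theorem enorm2_mk_zero {r : ℝ} (hr : 0 ≤ r) : enorm2 (r, 0) = r := by
  simp [enorm2, Real.sqrt_sq hr]

theorem enorm2_smul (c : ℝ) (v : ℝ × ℝ) : enorm2 (c • v) = |c| * enorm2 v := by
  rw [enorm2, enorm2, ← Real.sqrt_sq_eq_abs, ← Real.sqrt_mul (sq_nonneg c)]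
  congr 1
  simp only [Prod.smul_fst, Prod.smul_snd, smul_eq_mul]
  ring

theorem edot_comm (v w : ℝ × ℝ) : edot v w = edot w v := by
  simp only [edot]; ring

theorem abs_fst_mul_add_abs_snd_mul_le (a b : ℝ × ℝ) :
    |a.1 * b.1| + |a.2 * b.2| ≤ enorm2 a * enorm2 b := by
  rw [enorm2, enorm2, ← Real.sqrt_mul (by positivity)]
  refine Real.le_sqrt_of_sq_le ?_
  rw [abs_mul, abs_mul, ← sq_abs a.1, ← sq_abs a.2, ← sq_abs b.1, ← sq_abs b.2]
  nlinarith [sq_nonneg (|a.1| * |b.2| - |a.2| * |b.1|)]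

theorem hasDerivAt_edot_line (p q a b : ℝ × ℝ) :
    HasDerivAt (fun t : ℝ => edot (p + t • a) (q + t • b)) (edot a q + edot p b) 0 := by
  have hpoly : (fun t : ℝ => edot (p + t • a) (q + t • b)) =
      fun t => edot p q + t * (edot a q + edot p b) + t ^ 2 * edot a b := by
    funext t
    simp only [edot, Prod.fst_add, Prod.snd_add, Prod.smul_fst, Prod.smul_snd, smul_eq_mul]
    ring
  rw [hpoly]
  simpa using
    (((hasDerivAt_id (0 : ℝ)).mul_const (edot a q + edot p b)).const_add (edot p q)).fun_add
      ((hasDerivAt_pow 2 (0 : ℝ)).mul_const (edot a b))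

theorem hasDerivAt_edot_line_left (p a c : ℝ × ℝ) :
    HasDerivAt (fun t : ℝ => edot (p + t • a) c) (edot a c) 0 := by
  simpa [edot] using hasDerivAt_edot_line p c a 0

theorem hasDerivAt_enorm2_line {p : ℝ × ℝ} (hp : 0 < enorm2 p) (a : ℝ × ℝ) :
    HasDerivAt (fun t : ℝ => enorm2 (p + t • a)) (edot p a / enorm2 p) 0 := by
  have hp' : edot (p + (0 : ℝ) • a) (p + (0 : ℝ) • a) ≠ 0 := by
    rw [zero_smul, add_zero]
    exact (Real.sqrt_pos.mp (enorm2_eq_sqrt_edot p ▸ hp)).ne'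
  simp only [enorm2_eq_sqrt_edot] at hp ⊢
  convert (hasDerivAt_edot_line p p a a).sqrt hp' using 1
  rw [zero_smul, add_zero, edot_comm a p]
  ring

theorem eventually_enorm2_line_pos {p : ℝ × ℝ} (hp : 0 < enorm2 p) (a : ℝ × ℝ) :
    ∀ᶠ s in 𝓝 (0 : ℝ), 0 < enorm2 (p + s • a) :=
  continuousAt_const.eventually_lt (hasDerivAt_enorm2_line hp a).continuousAt (by simpa using hp)

end Euclidean

section ContDiff

variable {φ : ℝ → ℝ} {U : Set ℝ} {x : ℝ} {n : WithTop ℕ∞}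

theorem ContDiffOn.hasDerivAt_of_isOpen (hφ : ContDiffOn ℝ n φ U) (hn : n ≠ 0) (hU : IsOpen U)
    (hx : x ∈ U) : HasDerivAt φ (deriv φ x) x :=
  ((hφ.differentiableOn hn).differentiableAt (hU.mem_nhds hx)).hasDerivAt

theorem ContDiffOn.hasDerivAt_deriv_of_isOpen (hφ : ContDiffOn ℝ n φ U) (hn : 2 ≤ n)
    (hU : IsOpen U) (hx : x ∈ U) : HasDerivAt (deriv φ) (deriv (deriv φ) x) x :=
  ((hφ.deriv_of_isOpen hU (m := 1) hn).hasDerivAt_of_isOpen one_ne_zero hU hx)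

end ContDiff

def diagForm (c₁ c₂ : ℝ) : LinearMap.BilinForm ℝ (ℝ × ℝ) :=
  LinearMap.mk₂ ℝ (fun a b => c₁ * (a.1 * b.1) + c₂ * (a.2 * b.2))
    (fun _ _ _ => by simp only [Prod.fst_add, Prod.snd_add]; ring)
    (fun _ _ _ => by simp only [Prod.smul_fst, Prod.smul_snd, smul_eq_mul]; ring)
    (fun _ _ _ => by simp only [Prod.fst_add, Prod.snd_add]; ring)
    (fun _ _ _ => by simp only [Prod.smul_fst, Prod.smul_snd, smul_eq_mul]; ring)

@[simp]
theorem diagForm_apply (c₁ c₂ : ℝ) (a b : ℝ × ℝ) :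
    diagForm c₁ c₂ a b = c₁ * (a.1 * b.1) + c₂ * (a.2 * b.2) :=
  rfl

theorem abs_diagForm_le (c₁ c₂ : ℝ) (a b : ℝ × ℝ) :
    |diagForm c₁ c₂ a b| ≤ max |c₁| |c₂| * (enorm2 a * enorm2 b) :=
  calc |diagForm c₁ c₂ a b| ≤ |c₁| * |a.1 * b.1| + |c₂| * |a.2 * b.2| := by
        rw [diagForm_apply, ← abs_mul, ← abs_mul]; exact abs_add_le _ _
    _ ≤ max |c₁| |c₂| * (|a.1 * b.1| + |a.2 * b.2|) := by
        rw [mul_add]; gcongr; exacts [le_max_left _ _, le_max_right _ _]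
    _ ≤ max |c₁| |c₂| * (enorm2 a * enorm2 b) := by
        gcongr; exact abs_fst_mul_add_abs_snd_mul_le a b

/-- `HasVariations g d c` with `g t s = E (y + t • u + s • v)` says that `δE(y)[u] = d` and
`δ²E(y)[u, v] = c`, the inner `t`-derivative existing for all small `s`. -/
def HasVariations (g : ℝ → ℝ → ℝ) (d c : ℝ) : Prop :=
  ∃ g' : ℝ → ℝ, (∀ᶠ s in 𝓝 0, HasDerivAt (fun t => g t s) (g' s) 0) ∧ g' 0 = d ∧
    HasDerivAt g' c 0

namespace HasVariations

variable {g h : ℝ → ℝ → ℝ} {d c d' c' : ℝ}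

theorem deriv_eq (hg : HasVariations g d c) : deriv (fun t => g t 0) 0 = d := by
  obtain ⟨g', hg', h0, -⟩ := hg
  rw [hg'.self_of_nhds.deriv, h0]

theorem deriv_deriv_eq (hg : HasVariations g d c) :
    deriv (fun s => deriv (fun t => g t s) 0) 0 = c := by
  obtain ⟨g', hg', -, hc⟩ := hg
  have hderiv : (fun s => deriv (fun t => g t s) 0) =ᶠ[𝓝 0] g' := hg'.mono fun s hs => hs.deriv
  rw [hderiv.deriv_eq, hc.deriv]

theorem add (hg : HasVariations g d c) (hh : HasVariations h d' c') :
    HasVariations (fun t s => g t s + h t s) (d + d') (c + c') := by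
  obtain ⟨g', hg', hg0, hgc⟩ := hg
  obtain ⟨h', hh', hh0, hhc⟩ := hh
  exact ⟨fun s => g' s + h' s, (hg'.and hh').mono fun s hs => hs.1.add hs.2,
    by simp [hg0, hh0], hgc.add hhc⟩

theorem const_mul (a : ℝ) (hg : HasVariations g d c) :
    HasVariations (fun t s => a * g t s) (a * d) (a * c) := by
  obtain ⟨g', hg', hg0, hgc⟩ := hg
  exact ⟨fun s => a * g' s, hg'.mono fun s hs => hs.const_mul a, by simp [hg0], hgc.const_mul a⟩

theorem sum {ι : Type*} (S : Finset ι) {g : ι → ℝ → ℝ → ℝ} {d c : ι → ℝ}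
    (hg : ∀ i ∈ S, HasVariations (g i) (d i) (c i)) :
    HasVariations (fun t s => ∑ i ∈ S, g i t s) (∑ i ∈ S, d i) (∑ i ∈ S, c i) := by
  choose! g' hg' hg0 hgc using hg
  refine ⟨fun s => ∑ i ∈ S, g' i s, ?_, sum_congr rfl hg0, HasDerivAt.fun_sum hgc⟩
  filter_upwards [(eventually_all_finset S).2 hg'] with s hs
  exact HasDerivAt.fun_sum hs

theorem dE_eq {E : (ℤ → ℝ × ℝ) → ℝ} {y u v : ℤ → ℝ × ℝ}
    (hE : HasVariations (fun t s => E (fun ℓ => y ℓ + t • u ℓ + s • v ℓ)) d c) :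
    dE E y u = d := by
  simpa [dE] using hE.deriv_eq

theorem d2E_eq {E : (ℤ → ℝ × ℝ) → ℝ} {y u v : ℤ → ℝ × ℝ}
    (hE : HasVariations (fun t s => E (fun ℓ => y ℓ + t • u ℓ + s • v ℓ)) d c) :
    d2E E y u v = c :=
  hE.deriv_deriv_eq

end HasVariations

section SiteEnergies

variable {φ : ℝ → ℝ} {α F : ℝ}

/-- The Hessian of `v ↦ φ ‖v‖` at `(r, 0)`. -/
def pairHessian (φ : ℝ → ℝ) (r : ℝ) : LinearMap.BilinForm ℝ (ℝ × ℝ) :=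
  diagForm (deriv (deriv φ) r) (deriv φ r / r)

theorem hasVariations_pair (hφ : ContDiffOn ℝ 2 φ (Set.Ioi 0)) {r : ℝ} (hr : 0 < r)
    (a b : ℝ × ℝ) :
    HasVariations (fun t s => φ (enorm2 ((r, 0) + t • a + s • b))) (deriv φ r * a.1)
      (pairHessian φ r a b) := by
  have hr' : 0 < enorm2 ((r, 0) : ℝ × ℝ) := by rwa [enorm2_mk_zero hr.le]
  refine ⟨fun s => deriv φ (enorm2 ((r, 0) + s • b)) *
      (edot ((r, 0) + s • b) a / enorm2 ((r, 0) + s • b)), ?_, ?_, ?_⟩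
  · filter_upwards [eventually_enorm2_line_pos hr' b] with s hs
    simp only [add_right_comm _ _ (s • b)]
    exact (hφ.hasDerivAt_of_isOpen (by norm_num) isOpen_Ioi (by simpa using hs)).comp_of_eq 0
      (hasDerivAt_enorm2_line hs a) (by simp)
  · simp [enorm2_mk_zero hr.le, edot, hr.ne']
  · have hφ' := (hφ.hasDerivAt_deriv_of_isOpen le_rfl isOpen_Ioi (Set.mem_Ioi.2 hr)).comp_of_eq 0
      (hasDerivAt_enorm2_line hr' b) (by simp [enorm2_mk_zero hr.le])
    refine (hφ'.fun_mul ((hasDerivAt_edot_line_left (r, 0) b a).fun_div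
      (hasDerivAt_enorm2_line hr' b) (by simpa using hr'.ne'))).congr_deriv ?_
    simp only [Function.comp_apply, zero_smul, add_zero, enorm2_mk_zero hr.le, pairHessian,
      diagForm_apply, edot]
    field_simp
    ring

/-- The derivative at `t = 0` of the cosine of the angle between `p + t • a` and `q + t • b`, in
the form the quotient rule produces. -/
def cosLineDeriv (p q a b : ℝ × ℝ) : ℝ :=
  ((edot a q + edot p b) * (enorm2 p * enorm2 q) -
      edot p q * (edot p a / enorm2 p * enorm2 q + enorm2 p * (edot q b / enorm2 q))) /
    (enorm2 p * enorm2 q) ^ 2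

theorem hasDerivAt_cos_line {p q : ℝ × ℝ} (hp : 0 < enorm2 p) (hq : 0 < enorm2 q)
    (a b : ℝ × ℝ) :
    HasDerivAt
      (fun t : ℝ => edot (p + t • a) (q + t • b) / (enorm2 (p + t • a) * enorm2 (q + t • b)))
      (cosLineDeriv p q a b) 0 := by
  refine ((hasDerivAt_edot_line p q a b).fun_div
    ((hasDerivAt_enorm2_line hp a).fun_mul (hasDerivAt_enorm2_line hq b))
    (by simpa using (mul_pos hp hq).ne')).congr_deriv ?_
  simp only [zero_smul, add_zero, cosLineDeriv]

theorem hasDerivAt_cosLineDeriv (hF : 0 < F) (a' a b' b : ℝ × ℝ) :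
    HasDerivAt (fun s : ℝ => cosLineDeriv ((F, 0) + s • b') ((F, 0) + s • b) a' a)
      (-((a'.2 - a.2) * (b'.2 - b.2)) / F ^ 2) 0 := by
  have hF' : 0 < enorm2 ((F, 0) : ℝ × ℝ) := by rwa [enorm2_mk_zero hF.le]
  have hne : enorm2 (((F, 0) : ℝ × ℝ) + (0 : ℝ) • b) ≠ 0 := by simpa using hF'.ne'
  have hne' : enorm2 (((F, 0) : ℝ × ℝ) + (0 : ℝ) • b') ≠ 0 := by simpa using hF'.ne'
  have hn := hasDerivAt_enorm2_line hF' b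
  have hn' := hasDerivAt_enorm2_line hF' b'
  have ha : HasDerivAt (fun s : ℝ => edot a' ((F, 0) + s • b)) (edot a' b) 0 := by
    simpa [edot] using hasDerivAt_edot_line a' (F, 0) 0 b
  refine ((((ha.fun_add (hasDerivAt_edot_line_left (F, 0) b' a)).fun_mul
      (hn'.fun_mul hn)).fun_sub
      ((hasDerivAt_edot_line (F, 0) (F, 0) b' b).fun_mul
        ((((hasDerivAt_edot_line_left (F, 0) b' a').fun_div hn' hne').fun_mul hn).fun_add
          (hn'.fun_mul ((hasDerivAt_edot_line_left (F, 0) b a).fun_div hn hne))))).fun_div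
      ((hn'.fun_mul hn).fun_pow 2) (by simpa using hF'.ne')).congr_deriv ?_
  simp only [zero_smul, add_zero, enorm2_mk_zero hF.le, edot]
  field_simp
  ring

/-- The Hessian of the bond-angle energy of two bonds equal to `(F, 0)`, as a form in the
differences of the bond perturbations. -/
def angleHessian (α F : ℝ) : LinearMap.BilinForm ℝ (ℝ × ℝ) :=
  diagForm 0 (α / F ^ 2)

theorem hasVariations_angle (hF : 0 < F) (a' a b' b : ℝ × ℝ) :
    HasVariations (fun t s => α * (1 - edot ((F, 0) + t • a' + s • b') ((F, 0) + t • a + s • b) /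
        (enorm2 ((F, 0) + t • a' + s • b') * enorm2 ((F, 0) + t • a + s • b)))) 0
      (angleHessian α F (a' - a) (b' - b)) := by
  have hF' : 0 < enorm2 ((F, 0) : ℝ × ℝ) := by rwa [enorm2_mk_zero hF.le]
  refine ⟨fun s => -(α * cosLineDeriv ((F, 0) + s • b') ((F, 0) + s • b) a' a), ?_, ?_, ?_⟩
  · filter_upwards [eventually_enorm2_line_pos hF' b', eventually_enorm2_line_pos hF' b]
      with s hs' hs
    simp only [add_right_comm _ _ (s • _)]
    exact (((hasDerivAt_cos_line hs' hs a' a).const_sub 1).const_mul α).congr_deriv (by ring)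
  · simp only [cosLineDeriv, zero_smul, add_zero, enorm2_mk_zero hF.le, edot]
    field_simp
    ring
  · refine ((hasDerivAt_cosLineDeriv hF a' a b' b).const_mul α).neg.congr_deriv ?_
    simp only [angleHessian, diagForm_apply, Prod.fst_sub, Prod.snd_sub]
    ring

end SiteEnergies

section Energies

variable {N : ℕ} {ε F α : ℝ} {φ : ℝ → ℝ}

theorem bd_yLin_add (hε : ε ≠ 0) (t s : ℝ) (u v : ℤ → ℝ × ℝ) (ℓ : ℤ) :
    bd ε (fun m => yLin ε F m + t • u m + s • v m) ℓ = (F, 0) + t • bd ε u ℓ + s • bd ε v ℓ := by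
  ext <;> simp only [bd, yLin, Prod.smul_fst, Prod.smul_snd, Prod.fst_add, Prod.snd_add,
    Prod.fst_sub, Prod.snd_sub, smul_eq_mul] <;> push_cast <;> field_simp <;> ring

theorem hasVariations_Ea (hφ : ContDiffOn ℝ 2 φ (Set.Ioi 0)) (hε : ε ≠ 0) (hF : 0 < F)
    (u v : ℤ → ℝ × ℝ) :
    HasVariations (fun t s => Ea N ε φ (fun ℓ => yLin ε F ℓ + t • u ℓ + s • v ℓ))
      (ε * ∑ ℓ ∈ Icc (1 : ℤ) N,
        (deriv φ F * (bd ε u ℓ).1 + deriv φ (2 * F) * (bd ε u (ℓ + 1) + bd ε u ℓ).1))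
      (ε * ∑ ℓ ∈ Icc (1 : ℤ) N, (pairHessian φ F (bd ε u ℓ) (bd ε v ℓ) +
        pairHessian φ (2 * F) (bd ε u (ℓ + 1) + bd ε u ℓ) (bd ε v (ℓ + 1) + bd ε v ℓ))) := by
  have hsum : ∀ (t s : ℝ) (a a' b b' : ℝ × ℝ),
      ((F, 0) + t • a' + s • b') + ((F, 0) + t • a + s • b) =
        ((2 * F, 0) : ℝ × ℝ) + t • (a' + a) + s • (b' + b) := by
    intros; ext <;> simp <;> ring
  simp only [Ea, bd_yLin_add hε, hsum]
  exact (HasVariations.sum _ fun ℓ _ => (hasVariations_pair hφ hF _ _).add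
    (hasVariations_pair hφ (by positivity) _ _)).const_mul ε

theorem hasVariations_ECB (hφ : ContDiffOn ℝ 2 φ (Set.Ioi 0)) (hε : ε ≠ 0) (hF : 0 < F)
    (u v : ℤ → ℝ × ℝ) :
    HasVariations (fun t s => ECB N ε φ (fun ℓ => yLin ε F ℓ + t • u ℓ + s • v ℓ))
      (ε * ∑ ℓ ∈ Icc (1 : ℤ) N,
        (deriv φ F * (bd ε u ℓ).1 + deriv φ (2 * F) * ((2 : ℝ) • bd ε u ℓ).1))
      (ε * ∑ ℓ ∈ Icc (1 : ℤ) N, (pairHessian φ F (bd ε u ℓ) (bd ε v ℓ) +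
        pairHessian φ (2 * F) ((2 : ℝ) • bd ε u ℓ) ((2 : ℝ) • bd ε v ℓ))) := by
  have hdouble : ∀ (t s : ℝ) (a b : ℝ × ℝ), 2 * enorm2 ((F, 0) + t • a + s • b) =
      enorm2 ((2 * F, 0) + t • (2 : ℝ) • a + s • (2 : ℝ) • b) := by
    intro t s a b
    rw [show ((2 * F, 0) : ℝ × ℝ) + t • (2 : ℝ) • a + s • (2 : ℝ) • b =
        (2 : ℝ) • ((F, 0) + t • a + s • b) by ext <;> simp <;> ring, enorm2_smul, abs_two]
  simp only [ECB, bd_yLin_add hε, hdouble]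
  exact (HasVariations.sum _ fun ℓ _ => (hasVariations_pair hφ hF _ _).add
    (hasVariations_pair hφ (by positivity) _ _)).const_mul ε

theorem hasVariations_Eb (hε : ε ≠ 0) (hF : 0 < F) (u v : ℤ → ℝ × ℝ) :
    HasVariations (fun t s => Eb N ε α (fun ℓ => yLin ε F ℓ + t • u ℓ + s • v ℓ)) 0
      (ε * ∑ ℓ ∈ Icc (1 : ℤ) N,
        angleHessian α F (bd ε u (ℓ + 1) - bd ε u ℓ) (bd ε v (ℓ + 1) - bd ε v ℓ)) := by
  have h := (HasVariations.sum (Icc (1 : ℤ) N) fun ℓ _ => hasVariations_angle (α := α) hF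
    (bd ε u (ℓ + 1)) (bd ε u ℓ) (bd ε v (ℓ + 1)) (bd ε v ℓ)).const_mul ε
  rw [sum_const_zero, mul_zero] at h
  simpa only [Eb, bd_yLin_add hε] using h

theorem dE_Ea_add_Eb_yLin (hφ : ContDiffOn ℝ 2 φ (Set.Ioi 0)) (hε : ε ≠ 0) (hF : 0 < F)
    (u : ℤ → ℝ × ℝ) :
    dE (fun y => Ea N ε φ y + Eb N ε α y) (yLin ε F) u = ε * ∑ ℓ ∈ Icc (1 : ℤ) N,
      (deriv φ F * (bd ε u ℓ).1 + deriv φ (2 * F) * (bd ε u (ℓ + 1) + bd ε u ℓ).1) := by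
  rw [((hasVariations_Ea hφ hε hF u u).add (hasVariations_Eb (α := α) hε hF u u)).dE_eq,
    add_zero]

theorem dE_ECB_add_Eb_yLin (hφ : ContDiffOn ℝ 2 φ (Set.Ioi 0)) (hε : ε ≠ 0) (hF : 0 < F)
    (u : ℤ → ℝ × ℝ) :
    dE (fun y => ECB N ε φ y + Eb N ε α y) (yLin ε F) u = ε * ∑ ℓ ∈ Icc (1 : ℤ) N,
      (deriv φ F * (bd ε u ℓ).1 + deriv φ (2 * F) * ((2 : ℝ) • bd ε u ℓ).1) := by
  rw [((hasVariations_ECB hφ hε hF u u).add (hasVariations_Eb (α := α) hε hF u u)).dE_eq,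
    add_zero]

theorem d2E_Ea_add_Eb_yLin (hφ : ContDiffOn ℝ 2 φ (Set.Ioi 0)) (hε : ε ≠ 0) (hF : 0 < F)
    (u v : ℤ → ℝ × ℝ) :
    d2E (fun y => Ea N ε φ y + Eb N ε α y) (yLin ε F) u v =
      ε * ∑ ℓ ∈ Icc (1 : ℤ) N, (pairHessian φ F (bd ε u ℓ) (bd ε v ℓ) +
        pairHessian φ (2 * F) (bd ε u (ℓ + 1) + bd ε u ℓ) (bd ε v (ℓ + 1) + bd ε v ℓ)) +
      ε * ∑ ℓ ∈ Icc (1 : ℤ) N,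
        angleHessian α F (bd ε u (ℓ + 1) - bd ε u ℓ) (bd ε v (ℓ + 1) - bd ε v ℓ) :=
  ((hasVariations_Ea hφ hε hF u v).add (hasVariations_Eb hε hF u v)).d2E_eq

theorem d2E_ECB_add_Eb_yLin (hφ : ContDiffOn ℝ 2 φ (Set.Ioi 0)) (hε : ε ≠ 0) (hF : 0 < F)
    (u v : ℤ → ℝ × ℝ) :
    d2E (fun y => ECB N ε φ y + Eb N ε α y) (yLin ε F) u v =
      ε * ∑ ℓ ∈ Icc (1 : ℤ) N, (pairHessian φ F (bd ε u ℓ) (bd ε v ℓ) +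
        pairHessian φ (2 * F) ((2 : ℝ) • bd ε u ℓ) ((2 : ℝ) • bd ε v ℓ)) +
      ε * ∑ ℓ ∈ Icc (1 : ℤ) N,
        angleHessian α F (bd ε u (ℓ + 1) - bd ε u ℓ) (bd ε v (ℓ + 1) - bd ε v ℓ) :=
  ((hasVariations_ECB hφ hε hF u v).add (hasVariations_Eb hε hF u v)).d2E_eq

theorem dE_Ea_add_Eb_eq_dE_ECB_add_Eb (hφ : ContDiffOn ℝ 2 φ (Set.Ioi 0)) (hε : ε ≠ 0)
    (hF : 0 < F) {u : ℤ → ℝ × ℝ} (hu : Periodic u N) :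
    dE (fun y => Ea N ε φ y + Eb N ε α y) (yLin ε F) u =
      dE (fun y => ECB N ε φ y + Eb N ε α y) (yLin ε F) u := by
  have hshift := congrArg Prod.fst (hu.bd (ε := ε)).sum_Icc_add_one
  simp only [Prod.fst_sum] at hshift
  simp only [dE_Ea_add_Eb_yLin hφ hε hF, dE_ECB_add_Eb_yLin hφ hε hF, Prod.fst_add,
    Prod.smul_fst, smul_eq_mul, mul_add, sum_add_distrib, ← mul_sum, hshift]
  ring

theorem d2E_ECB_add_Eb_sub (hφ : ContDiffOn ℝ 2 φ (Set.Ioi 0)) (hε : ε ≠ 0) (hF : 0 < F)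
    (u u' v : ℤ → ℝ × ℝ) :
    d2E (fun y => ECB N ε φ y + Eb N ε α y) (yLin ε F) u v -
        d2E (fun y => ECB N ε φ y + Eb N ε α y) (yLin ε F) u' v =
      d2E (fun y => ECB N ε φ y + Eb N ε α y) (yLin ε F) (fun ℓ => u ℓ - u' ℓ) v := by
  simp only [d2E_ECB_add_Eb_yLin hφ hε hF, bd_fun_sub, smul_sub, map_sub, LinearMap.sub_apply,
    sub_sub_sub_comm, sum_add_distrib, sum_sub_distrib]
  ring

theorem d2E_ECB_add_Eb_sub_d2E_Ea_add_Eb (hφ : ContDiffOn ℝ 2 φ (Set.Ioi 0)) (hε : ε ≠ 0)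
    (hF : 0 < F) {u v : ℤ → ℝ × ℝ} (hu : Periodic u N) (hv : Periodic v N) :
    d2E (fun y => ECB N ε φ y + Eb N ε α y) (yLin ε F) u v -
        d2E (fun y => Ea N ε φ y + Eb N ε α y) (yLin ε F) u v =
      -ε ^ 3 * ∑ ℓ ∈ Icc (1 : ℤ) N,
        pairHessian φ (2 * F) (bd ε (bd ε (bd ε u)) (ℓ + 1)) (bd ε v ℓ) := by
  have hcons := sum_bilin_two_smul_sub_bilin_add (pairHessian φ (2 * F)) hε hu hv
  simp only [sum_sub_distrib] at hcons
  simp only [d2E_ECB_add_Eb_yLin hφ hε hF, d2E_Ea_add_Eb_yLin hφ hε hF, sum_add_distrib]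
  linear_combination ε * hcons

end Energies

section Estimates

variable {N : ℕ} {ε F α : ℝ} {φ : ℝ → ℝ}

theorem nrm_sq (hε : 0 ≤ ε) (v : ℤ → ℝ × ℝ) :
    nrm N ε v ^ 2 = ε * ∑ ℓ ∈ Icc (1 : ℤ) N, enorm2 (v ℓ) ^ 2 :=
  Real.sq_sqrt (mul_nonneg hε (sum_nonneg fun _ _ => sq_nonneg _))

theorem Function.Periodic.nrm_comp_add_one {v : ℤ → ℝ × ℝ} (hv : Periodic v N) :
    nrm N ε (fun ℓ => v (ℓ + 1)) = nrm N ε v := by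
  rw [nrm, nrm, Periodic.sum_Icc_add_one (g := fun ℓ => enorm2 (v ℓ) ^ 2) fun ℓ => by
    simp only [hv ℓ]]

theorem sum_enorm2_mul_le_nrm_mul_nrm (hε : 0 ≤ ε) (v w : ℤ → ℝ × ℝ) :
    ε * ∑ ℓ ∈ Icc (1 : ℤ) N, enorm2 (v ℓ) * enorm2 (w ℓ) ≤ nrm N ε v * nrm N ε w := by
  rw [nrm, nrm, Real.sqrt_mul hε, Real.sqrt_mul hε, mul_mul_mul_comm, Real.mul_self_sqrt hε]
  exact mul_le_mul_of_nonneg_left (Real.sum_mul_le_sqrt_mul_sqrt _ _ _) hε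

theorem neg_sum_diagForm_le (hε : 0 ≤ ε) (c₁ c₂ : ℝ) {v : ℤ → ℝ × ℝ} (hv : Periodic v N)
    (w : ℤ → ℝ × ℝ) :
    -(ε * ∑ ℓ ∈ Icc (1 : ℤ) N, diagForm c₁ c₂ (v (ℓ + 1)) (w ℓ)) ≤
      max |c₁| |c₂| * (nrm N ε v * nrm N ε w) :=
  calc -(ε * ∑ ℓ ∈ Icc (1 : ℤ) N, diagForm c₁ c₂ (v (ℓ + 1)) (w ℓ))
      ≤ ε * ∑ ℓ ∈ Icc (1 : ℤ) N, |diagForm c₁ c₂ (v (ℓ + 1)) (w ℓ)| := by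
        rw [← mul_neg, ← sum_neg_distrib]
        gcongr with ℓ
        exact neg_le_abs _
    _ ≤ ε * ∑ ℓ ∈ Icc (1 : ℤ) N, max |c₁| |c₂| * (enorm2 (v (ℓ + 1)) * enorm2 (w ℓ)) := by
        gcongr with ℓ
        exact abs_diagForm_le _ _ _ _
    _ = max |c₁| |c₂| * (ε * ∑ ℓ ∈ Icc (1 : ℤ) N, enorm2 (v (ℓ + 1)) * enorm2 (w ℓ)) := by
        rw [← mul_sum, mul_left_comm]
    _ ≤ max |c₁| |c₂| * (nrm N ε v * nrm N ε w) := by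
        rw [← hv.nrm_comp_add_one]
        exact mul_le_mul_of_nonneg_left (sum_enorm2_mul_le_nrm_mul_nrm hε _ _)
          ((abs_nonneg _).trans (le_max_left _ _))

theorem pairHessian_add_pairHessian_two_smul_ge {γ : ℝ} (hF : 0 < F)
    (hγ₁ : γ ≤ deriv (deriv φ) F + 4 * deriv (deriv φ) (2 * F))
    (hγ₂ : γ ≤ (deriv φ F + 2 * deriv φ (2 * F)) / F) (a : ℝ × ℝ) :
    γ * enorm2 a ^ 2 ≤
      pairHessian φ F a a + pairHessian φ (2 * F) ((2 : ℝ) • a) ((2 : ℝ) • a) := by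
  have hsplit : pairHessian φ F a a + pairHessian φ (2 * F) ((2 : ℝ) • a) ((2 : ℝ) • a) =
      (deriv (deriv φ) F + 4 * deriv (deriv φ) (2 * F)) * a.1 ^ 2 +
        (deriv φ F + 2 * deriv φ (2 * F)) / F * a.2 ^ 2 := by
    simp only [pairHessian, diagForm_apply, Prod.smul_fst, Prod.smul_snd, smul_eq_mul]
    field_simp
    ring
  rw [hsplit, enorm2_sq, mul_add]
  gcongr

theorem min_mul_nrm_bd_sq_le_d2E (hφ : ContDiffOn ℝ 2 φ (Set.Ioi 0)) (hε : 0 < ε) (hF : 0 < F)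
    (hα : 0 ≤ α) (v : ℤ → ℝ × ℝ) :
    min (deriv (deriv φ) F + 4 * deriv (deriv φ) (2 * F))
        ((deriv φ F + 2 * deriv φ (2 * F)) / F) * nrm N ε (bd ε v) ^ 2 ≤
      d2E (fun y => ECB N ε φ y + Eb N ε α y) (yLin ε F) v v := by
  have hangle : 0 ≤ ε * ∑ ℓ ∈ Icc (1 : ℤ) N,
      angleHessian α F (bd ε v (ℓ + 1) - bd ε v ℓ) (bd ε v (ℓ + 1) - bd ε v ℓ) := by
    refine mul_nonneg hε.le (sum_nonneg fun ℓ _ => ?_)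
    simp only [angleHessian, diagForm_apply, zero_mul, zero_add]
    exact mul_nonneg (by positivity) (mul_self_nonneg _)
  rw [d2E_ECB_add_Eb_yLin hφ hε.ne' hF, nrm_sq hε.le, mul_left_comm, mul_sum]
  refine le_add_of_le_of_nonneg
    (mul_le_mul_of_nonneg_left (sum_le_sum fun ℓ _ => ?_) hε.le) hangle
  exact pairHessian_add_pairHessian_two_smul_ge hF (min_le_left _ _) (min_le_right _ _) _

end Estimates

theorem le_div_mul_of_mul_sq_le {γ x c y : ℝ} (hγ : 0 < γ) (hx : 0 ≤ x) (hcy : 0 ≤ c * y)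
    (h : γ * x ^ 2 ≤ c * (y * x)) : x ≤ c / γ * y := by
  rw [div_mul_eq_mul_div, le_div_iff₀ hγ]
  rcases hx.eq_or_lt with rfl | hx
  · simpa using hcy
  · nlinarith

theorem stmt_14_general (N : ℕ) (hN : 4 ≤ N) (ε : ℝ) (hε : ε = (N : ℝ)⁻¹)
    (φ : ℝ → ℝ) (hφ : ContDiffOn ℝ 2 φ (Set.Ioi 0)) (F : ℝ) (hF : 0 < F)
    (α : ℝ) (hα : 0 < α)
    (hγ : 0 < min (deriv (deriv φ) F + 4 * deriv (deriv φ) (2 * F))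
      ((deriv φ F + 2 * deriv φ (2 * F)) / F))
    (f uab uCBb : ℤ → ℝ × ℝ) (huab : IsDisp N uab)
    (huCBb : IsDisp N uCBb)
    (heqa : ∀ v : ℤ → ℝ × ℝ, IsDisp N v →
      dE (fun y => Ea N ε φ y + Eb N ε α y) (yLin ε F) v
        + d2E (fun y => Ea N ε φ y + Eb N ε α y) (yLin ε F) uab v = ip N ε f v)
    (heqCB : ∀ v : ℤ → ℝ × ℝ, IsDisp N v →
      dE (fun y => ECB N ε φ y + Eb N ε α y) (yLin ε F) v
        + d2E (fun y => ECB N ε φ y + Eb N ε α y) (yLin ε F) uCBb v = ip N ε f v) :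
    nrm N ε (bd ε (fun ℓ => uab ℓ - uCBb ℓ)) ≤
      ε ^ 2 * max |deriv (deriv φ) (2 * F)| |deriv φ (2 * F) / (2 * F)| /
        min (deriv (deriv φ) F + 4 * deriv (deriv φ) (2 * F))
          ((deriv φ F + 2 * deriv φ (2 * F)) / F) *
        nrm N ε (bd ε (bd ε (bd ε uab))) := by
  have hε₀ : 0 < ε := by rw [hε]; exact inv_pos.2 (by exact_mod_cast (by omega : 0 < N))
  have huab' : Periodic uab N := huab.1
  set w := fun ℓ => uab ℓ - uCBb ℓ
  have hw : IsDisp N w := ⟨fun ℓ => by simp only [w, huab.1 ℓ, huCBb.1 ℓ],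
    by simp only [w, sum_sub_distrib, huab.2, huCBb.2, sub_zero]⟩
  have hsame : d2E (fun y => Ea N ε φ y + Eb N ε α y) (yLin ε F) uab w =
      d2E (fun y => ECB N ε φ y + Eb N ε α y) (yLin ε F) uCBb w := by
    linarith [heqa w hw, heqCB w hw, dE_Ea_add_Eb_eq_dE_ECB_add_Eb (α := α) hφ hε₀.ne' hF hw.1]
  refine le_div_mul_of_mul_sq_le hγ (Real.sqrt_nonneg _) (mul_nonneg (mul_nonneg (sq_nonneg ε)
    ((abs_nonneg _).trans (le_max_left _ _))) (Real.sqrt_nonneg _)) ?_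
  calc _ ≤ d2E (fun y => ECB N ε φ y + Eb N ε α y) (yLin ε F) w w :=
        min_mul_nrm_bd_sq_le_d2E hφ hε₀ hF hα.le w
    _ = d2E (fun y => ECB N ε φ y + Eb N ε α y) (yLin ε F) uab w -
          d2E (fun y => Ea N ε φ y + Eb N ε α y) (yLin ε F) uab w := by
        rw [← d2E_ECB_add_Eb_sub hφ hε₀.ne' hF, hsame]
    _ = ε ^ 2 * -(ε * ∑ ℓ ∈ Icc (1 : ℤ) N,
          pairHessian φ (2 * F) (bd ε (bd ε (bd ε uab)) (ℓ + 1)) (bd ε w ℓ)) := by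
        rw [d2E_ECB_add_Eb_sub_d2E_Ea_add_Eb hφ hε₀.ne' hF huab' hw.1]
        ring
    _ ≤ _ := mul_le_mul_of_nonneg_left
        (neg_sum_diagForm_le hε₀.le _ _ huab'.bd.bd.bd _) (sq_nonneg ε)
    _ = _ := by ring

theorem stmt_14 (N : ℕ) (hN : 4 ≤ N) (ε : ℝ) (hε : ε = (N : ℝ)⁻¹)
    (φ : ℝ → ℝ) (hφ : ContDiffOn ℝ 2 φ (Set.Ioi 0)) (F : ℝ) (hF : 0 < F)
    (α : ℝ) (hα : 0 < α)
    (hγ : 0 < min (deriv (deriv φ) F + 4 * deriv (deriv φ) (2 * F))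
      ((deriv φ F + 2 * deriv φ (2 * F)) / F))
    (f uab uCBb : ℤ → ℝ × ℝ) (hf : IsDisp N f) (huab : IsDisp N uab)
    (huCBb : IsDisp N uCBb)
    (heqa : ∀ v : ℤ → ℝ × ℝ, IsDisp N v →
      dE (fun y => Ea N ε φ y + Eb N ε α y) (yLin ε F) v
        + d2E (fun y => Ea N ε φ y + Eb N ε α y) (yLin ε F) uab v = ip N ε f v)
    (heqCB : ∀ v : ℤ → ℝ × ℝ, IsDisp N v →
      dE (fun y => ECB N ε φ y + Eb N ε α y) (yLin ε F) v
        + d2E (fun y => ECB N ε φ y + Eb N ε α y) (yLin ε F) uCBb v = ip N ε f v) :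
    nrm N ε (bd ε (fun ℓ => uab ℓ - uCBb ℓ)) ≤
      ε ^ 2 * max |deriv (deriv φ) (2 * F)| |deriv φ (2 * F) / (2 * F)| /
        min (deriv (deriv φ) F + 4 * deriv (deriv φ) (2 * F))
          ((deriv φ F + 2 * deriv φ (2 * F)) / F) *
        nrm N ε (bd ε (bd ε (bd ε uab))) :=
  stmt_14_general N hN ε hε φ hφ F hF α hα hγ f uab uCBb huab huCBb heqa heqCB
end
end

section
/- Let y_F be the linear chain with nearest-neighbor spacing Fε and suppose φ''(2F) ≤ 0. Then for every constrained displacement u ∈ 𝒰̃, δ²E^QNL(y_F)[u,u] ≥ (φ''(F) + 4 φ''(2F)) ‖u'‖²_{ℓ²_ε}, with equality for every u ∈ 𝒰̃ satisfying u''_ℓ = 0 for ℓ = 2, …, K+1. -/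
noncomputable section

open Real Finset

/-!
Along the line `r ↦ y_F + r • u` with `u ∈ 𝒰̃` every bond stays on the horizontal axis, with
length `F + r u'_ℓ` (nearest neighbours) or `2F + r (u'_{ℓ+1} + u'_ℓ)` (next-nearest neighbours).
Hence `r ↦ E^QNL(y_F + r • u)` is a finite sum of `φ` composed with affine functions of `r`, and
its second derivative at `0` is a quadratic form in `u'` with coefficients `φ''(F)` and `φ''(2F)`.
Rewriting the nonlocal interactions with `(x + y)² = 2x² + 2y² - (x - y)²` turns it into
`(φ''(F) + 4φ''(2F)) ‖u'‖² - ε φ''(2F) ∑_{ℓ=1}^K (u'_{ℓ+1} - u'_ℓ)²`, and the correction term is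
nonnegative when `φ''(2F) ≤ 0` and vanishes when `u''_ℓ = 0` for `ℓ = 2, …, K+1`.
-/

open Filter Topology

/-- Unlike `deriv (deriv f) x = a`, this predicate is stable under sums and scalar multiples. -/
def HasSecondDerivAt (f : ℝ → ℝ) (a x : ℝ) : Prop :=
  ∃ f' : ℝ → ℝ, (∀ᶠ y in 𝓝 x, HasDerivAt f (f' y) y) ∧ HasDerivAt f' a x

namespace HasSecondDerivAt

variable {f g : ℝ → ℝ} {a b x : ℝ}

theorem deriv_deriv (h : HasSecondDerivAt f a x) : deriv (deriv f) x = a := by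
  obtain ⟨f', hf', hf'a⟩ := h
  have : deriv f =ᶠ[𝓝 x] f' := hf'.mono fun y hy => hy.deriv
  rw [this.deriv_eq, hf'a.deriv]

theorem congr_of_eventuallyEq (h : HasSecondDerivAt f a x) (hg : g =ᶠ[𝓝 x] f) :
    HasSecondDerivAt g a x := by
  obtain ⟨f', hf', hf'a⟩ := h
  exact ⟨f', (hf'.and hg.eventually_nhds).mono fun y hy => hy.1.congr_of_eventuallyEq hy.2, hf'a⟩

theorem const (c x : ℝ) : HasSecondDerivAt (fun _ => c) 0 x :=
  ⟨fun _ => 0, .of_forall fun y => hasDerivAt_const y c, hasDerivAt_const x 0⟩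

theorem add (hf : HasSecondDerivAt f a x) (hg : HasSecondDerivAt g b x) :
    HasSecondDerivAt (fun y => f y + g y) (a + b) x := by
  obtain ⟨f', hf', hf'a⟩ := hf
  obtain ⟨g', hg', hg'b⟩ := hg
  exact ⟨fun y => f' y + g' y, (hf'.and hg').mono fun y hy => hy.1.add hy.2, hf'a.add hg'b⟩

theorem const_mul (c : ℝ) (hf : HasSecondDerivAt f a x) :
    HasSecondDerivAt (fun y => c * f y) (c * a) x := by
  obtain ⟨f', hf', hf'a⟩ := hf
  exact ⟨fun y => c * f' y, hf'.mono fun y hy => hy.const_mul c, hf'a.const_mul c⟩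

theorem sum {ι : Type*} {s : Finset ι} {f : ι → ℝ → ℝ} {a : ι → ℝ}
    (h : ∀ i ∈ s, HasSecondDerivAt (f i) (a i) x) :
    HasSecondDerivAt (fun y => ∑ i ∈ s, f i y) (∑ i ∈ s, a i) x := by
  induction s using Finset.cons_induction with
  | empty => simpa using const 0 x
  | cons i s hi ih =>
    simp only [sum_cons]
    exact (h i (mem_cons_self i s)).add (ih fun j hj => h j (mem_cons_of_mem hj))

end HasSecondDerivAt

theorem hasSecondDerivAt_comp_abs_affine {φ : ℝ → ℝ} (hφ : ContDiffOn ℝ 2 φ (Set.Ioi 0)) {a : ℝ}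
    (ha : 0 < a) (d : ℝ) :
    HasSecondDerivAt (fun r => φ |a + r * d|) (deriv (deriv φ) a * d ^ 2) 0 := by
  have hline : ∀ r : ℝ, HasDerivAt (fun r => a + r * d) d r := fun r => by
    simpa using ((hasDerivAt_id r).mul_const d).const_add a
  have hpos : ∀ᶠ r in 𝓝 (0 : ℝ), 0 < a + r * d := by
    have : Tendsto (fun r => a + r * d) (𝓝 0) (𝓝 a) := by
      simpa using (hline 0).continuousAt.tendsto
    exact this.eventually (lt_mem_nhds ha)
  have hφ' : ∀ {x : ℝ}, 0 < x → ContDiffAt ℝ 2 φ x := fun hx =>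
    hφ.contDiffAt (isOpen_Ioi.mem_nhds hx)
  have hφ'' : DifferentiableAt ℝ (deriv φ) a :=
    ((hφ.deriv_of_isOpen (m := 1) isOpen_Ioi (by norm_num)).contDiffAt
      (isOpen_Ioi.mem_nhds ha)).differentiableAt (by norm_num)
  have hsmooth : HasSecondDerivAt (fun r => φ (a + r * d)) (deriv (deriv φ) a * d ^ 2) 0 := by
    refine ⟨fun r => deriv φ (a + r * d) * d, hpos.mono fun r hr => ?_, ?_⟩
    · exact ((hφ' hr).differentiableAt (by norm_num)).hasDerivAt.comp r (hline r)
    · have hφ''0 : HasDerivAt (deriv φ) (deriv (deriv φ) a) (a + 0 * d) := by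
        simpa using hφ''.hasDerivAt
      simpa [sq, mul_assoc] using (hφ''0.comp 0 (hline 0)).mul_const d
  exact hsmooth.congr_of_eventuallyEq (hpos.mono fun r hr => by simp only [abs_of_pos hr])

theorem sum_Ico_add_sq_add_endpoints (b : ℤ → ℝ) {m n : ℤ} (h : m ≤ n) :
    ∑ ℓ ∈ Ico m n, (b (ℓ + 1) + b ℓ) ^ 2 + 2 * b m ^ 2 + 2 * b n ^ 2
      = 4 * ∑ ℓ ∈ Icc m n, b ℓ ^ 2 - ∑ ℓ ∈ Ico m n, (b (ℓ + 1) - b ℓ) ^ 2 := by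
  induction n, h using Int.leInduction with
  | base => simp only [Ico_self, sum_empty, Icc_self, sum_singleton]; ring
  | succ n hmn ih =>
    rw [← insert_Ico_right_eq_Ico_add_one hmn, ← insert_Icc_right_eq_Icc_add_one (by omega),
      sum_insert (by simp), sum_insert (by simp), sum_insert (by simp)]
    linear_combination ih

theorem d2E_self (E : (ℤ → ℝ × ℝ) → ℝ) (y u : ℤ → ℝ × ℝ) :
    d2E E y u u = deriv (deriv fun r : ℝ => E (fun ℓ => y ℓ + r • u ℓ)) 0 := by
  have hline : ∀ t s : ℝ, (fun ℓ => y ℓ + t • u ℓ + s • u ℓ) = fun ℓ => y ℓ + (t + s) • u ℓ :=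
    fun t s => funext fun ℓ => by rw [add_assoc, ← add_smul]
  have hshift : ∀ s : ℝ, deriv (fun t : ℝ => E (fun ℓ => y ℓ + (t + s) • u ℓ)) 0
      = deriv (fun r : ℝ => E (fun ℓ => y ℓ + r • u ℓ)) s := fun s => by
    rw [deriv_comp_add_const (fun r : ℝ => E (fun ℓ => y ℓ + r • u ℓ)), zero_add]
  simp only [d2E, hline, hshift]

theorem enorm2_mk_zero_s15 (x : ℝ) : enorm2 (x, 0) = |x| := by
  simp [enorm2, Real.sqrt_sq_eq_abs]

theorem bd_eq_zero_iff {ε : ℝ} (hε : ε ≠ 0) {v : ℤ → ℝ × ℝ} {ℓ : ℤ} :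
    bd ε v ℓ = 0 ↔ v ℓ = v (ℓ - 1) := by
  rw [bd, smul_eq_zero, sub_eq_zero, or_iff_right (inv_ne_zero hε)]

theorem sq_nrm_of_eq_mk_zero {N : ℕ} {ε : ℝ} (hε : 0 ≤ ε) {v : ℤ → ℝ × ℝ} {b : ℤ → ℝ}
    (hv : ∀ ℓ, v ℓ = (b ℓ, 0)) :
    nrm N ε v ^ 2 = ε * ∑ ℓ ∈ Icc (1 : ℤ) N, b ℓ ^ 2 := by
  simp only [nrm, hv, enorm2_mk_zero_s15, sq_abs]
  exact Real.sq_sqrt (mul_nonneg hε (sum_nonneg fun ℓ _ => sq_nonneg _))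

section LinearChain

variable {N K : ℕ} {ε F : ℝ} {φ : ℝ → ℝ} {u : ℤ → ℝ × ℝ} {b : ℤ → ℝ}

theorem bd_yLin_add_smul (hε : ε ≠ 0)
    (hb : ∀ ℓ, bd ε u ℓ = (b ℓ, 0)) (r : ℝ) (ℓ : ℤ) :
    bd ε (fun j => yLin ε F j + r • u j) ℓ = (F + r * b ℓ, 0) := by
  have hbℓ := hb ℓ
  simp only [bd, yLin, Prod.ext_iff, Prod.smul_fst, Prod.smul_snd, Prod.fst_sub, Prod.snd_sub,
    Prod.fst_add, Prod.snd_add, smul_eq_mul] at hbℓ ⊢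
  push_cast
  refine ⟨?_, by linear_combination r * hbℓ.2⟩
  field_simp at hbℓ ⊢
  linear_combination r * hbℓ.1

theorem EQNL_yLin_add_smul (hε : ε ≠ 0) (hb : ∀ ℓ, bd ε u ℓ = (b ℓ, 0)) :
    (fun r : ℝ => EQNL N K ε φ (fun ℓ => yLin ε F ℓ + r • u ℓ)) = fun r =>
      ε * ∑ ℓ ∈ Icc (1 : ℤ) N, φ |F + r * b ℓ|
      + ε * ∑ ℓ ∈ Icc (1 : ℤ) K, φ |2 * F + r * (b (ℓ + 1) + b ℓ)|
      + ε * ∑ ℓ ∈ Icc ((K : ℤ) + 2) N, φ |2 * F + r * (2 * b ℓ)|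
      + ε / 2 * φ |2 * F + r * (2 * b 1)| + ε / 2 * φ |2 * F + r * (2 * b (K + 1))| := by
  have hpair : ∀ (r : ℝ) (ℓ : ℤ), enorm2 (bd ε (fun j => yLin ε F j + r • u j) (ℓ + 1)
      + bd ε (fun j => yLin ε F j + r • u j) ℓ) = |2 * F + r * (b (ℓ + 1) + b ℓ)| := by
    intro r ℓ
    rw [bd_yLin_add_smul hε hb, bd_yLin_add_smul hε hb, Prod.mk_add_mk, add_zero,
      enorm2_mk_zero_s15]
    ring_nf
  have hdouble : ∀ (r : ℝ) (ℓ : ℤ), 2 * enorm2 (bd ε (fun j => yLin ε F j + r • u j) ℓ)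
      = |2 * F + r * (2 * b ℓ)| := by
    intro r ℓ
    rw [bd_yLin_add_smul hε hb, enorm2_mk_zero_s15, ← abs_two, ← abs_mul, abs_two]
    ring_nf
  funext r
  simp only [EQNL, hpair, hdouble]
  simp only [bd_yLin_add_smul hε hb, enorm2_mk_zero_s15]

theorem hasSecondDerivAt_EQNL_yLin (hφ : ContDiffOn ℝ 2 φ (Set.Ioi 0)) (hF : 0 < F)
    (hε : ε ≠ 0) (hb : ∀ ℓ, bd ε u ℓ = (b ℓ, 0)) :
    HasSecondDerivAt (fun r : ℝ => EQNL N K ε φ (fun ℓ => yLin ε F ℓ + r • u ℓ))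
      (ε * ∑ ℓ ∈ Icc (1 : ℤ) N, deriv (deriv φ) F * b ℓ ^ 2
      + ε * ∑ ℓ ∈ Icc (1 : ℤ) K, deriv (deriv φ) (2 * F) * (b (ℓ + 1) + b ℓ) ^ 2
      + ε * ∑ ℓ ∈ Icc ((K : ℤ) + 2) N, deriv (deriv φ) (2 * F) * (2 * b ℓ) ^ 2
      + ε / 2 * (deriv (deriv φ) (2 * F) * (2 * b 1) ^ 2)
      + ε / 2 * (deriv (deriv φ) (2 * F) * (2 * b (K + 1)) ^ 2)) 0 := by
  have h2F : 0 < 2 * F := by positivity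
  have bond := @hasSecondDerivAt_comp_abs_affine φ hφ
  rw [EQNL_yLin_add_smul hε hb]
  exact (((((HasSecondDerivAt.sum fun ℓ _ => bond hF (b ℓ)).const_mul ε).add
    ((HasSecondDerivAt.sum fun ℓ _ => bond h2F _).const_mul ε)).add
    ((HasSecondDerivAt.sum fun ℓ _ => bond h2F _).const_mul ε)).add
    ((bond h2F _).const_mul _)).add ((bond h2F _).const_mul _)

theorem d2E_EQNL_yLin (hφ : ContDiffOn ℝ 2 φ (Set.Ioi 0)) (hF : 0 < F) (hε : ε ≠ 0)
    (hK : K + 1 ≤ N) (hb : ∀ ℓ, bd ε u ℓ = (b ℓ, 0)) :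
    d2E (EQNL N K ε φ) (yLin ε F) u u
      = (deriv (deriv φ) F + 4 * deriv (deriv φ) (2 * F)) * (ε * ∑ ℓ ∈ Icc (1 : ℤ) N, b ℓ ^ 2)
        - ε * deriv (deriv φ) (2 * F) * ∑ ℓ ∈ Icc (1 : ℤ) K, (b (ℓ + 1) - b ℓ) ^ 2 := by
  have hsplit : ∑ ℓ ∈ Icc (1 : ℤ) N, b ℓ ^ 2
      = ∑ ℓ ∈ Icc (1 : ℤ) (K + 1), b ℓ ^ 2 + ∑ ℓ ∈ Icc ((K : ℤ) + 2) N, b ℓ ^ 2 := by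
    rw [← sum_union (disjoint_left.2 fun ℓ h₁ h₂ => by simp only [mem_Icc] at h₁ h₂; omega)]
    congr 1
    ext ℓ
    simp only [mem_union, mem_Icc]
    omega
  have hid := sum_Ico_add_sq_add_endpoints b (m := 1) (n := K + 1) (by omega)
  rw [Ico_add_one_right_eq_Icc] at hid
  rw [d2E_self, (hasSecondDerivAt_EQNL_yLin hφ hF hε hb).deriv_deriv]
  simp only [mul_pow, ← mul_sum]
  linear_combination ε * deriv (deriv φ) (2 * F) * hid - 4 * ε * deriv (deriv φ) (2 * F) * hsplit

end LinearChain

theorem stmt_15_general (N : ℕ) (ε : ℝ) (hε : ε = (N : ℝ)⁻¹)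
    (φ : ℝ → ℝ) (hφ : ContDiffOn ℝ 2 φ (Set.Ioi 0)) (F : ℝ) (hF : 0 < F)
    (K : ℕ) (hK2 : K + 2 < N)
    (hφ2 : deriv (deriv φ) (2 * F) ≤ 0) :
    ∀ u : ℤ → ℝ × ℝ, IsDisp1D N u →
      d2E (EQNL N K ε φ) (yLin ε F) u u ≥
        (deriv (deriv φ) F + 4 * deriv (deriv φ) (2 * F)) * (nrm N ε (bd ε u)) ^ 2 ∧
      ((∀ ℓ : ℤ, 2 ≤ ℓ → ℓ ≤ (K : ℤ) + 1 → bd ε (bd ε u) ℓ = 0) →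
        d2E (EQNL N K ε φ) (yLin ε F) u u =
          (deriv (deriv φ) F + 4 * deriv (deriv φ) (2 * F)) * (nrm N ε (bd ε u)) ^ 2) := by
  rintro u ⟨-, hu⟩
  have hε0 : 0 < ε := hε ▸ inv_pos.2 (by exact_mod_cast (by omega : 0 < N))
  set b : ℤ → ℝ := fun ℓ => (bd ε u ℓ).1
  have hb : ∀ ℓ, bd ε u ℓ = (b ℓ, 0) := fun ℓ => Prod.ext rfl (by simp [bd, hu])
  rw [d2E_EQNL_yLin hφ hF hε0.ne' (by omega) hb, sq_nrm_of_eq_mk_zero hε0.le hb]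
  refine ⟨?_, fun hflat => ?_⟩
  · have hcorr : ε * deriv (deriv φ) (2 * F) * ∑ ℓ ∈ Icc (1 : ℤ) K, (b (ℓ + 1) - b ℓ) ^ 2 ≤ 0 :=
      mul_nonpos_of_nonpos_of_nonneg (mul_nonpos_of_nonneg_of_nonpos hε0.le hφ2)
        (sum_nonneg fun ℓ _ => sq_nonneg _)
    linarith
  · have hS : ∑ ℓ ∈ Icc (1 : ℤ) K, (b (ℓ + 1) - b ℓ) ^ 2 = 0 := by
      refine sum_eq_zero fun ℓ hℓ => ?_
      rw [mem_Icc] at hℓ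
      have h := (bd_eq_zero_iff hε0.ne').1 (hflat (ℓ + 1) (by omega) (by omega))
      rw [add_sub_cancel_right] at h
      simp [b, h]
    rw [hS, mul_zero, sub_zero]

theorem stmt_15 (N : ℕ) (hN : 4 ≤ N) (ε : ℝ) (hε : ε = (N : ℝ)⁻¹)
    (φ : ℝ → ℝ) (hφ : ContDiffOn ℝ 2 φ (Set.Ioi 0)) (F : ℝ) (hF : 0 < F)
    (K : ℕ) (hK1 : 1 < K) (hK2 : K + 2 < N)
    (hφ2 : deriv (deriv φ) (2 * F) ≤ 0) :
    ∀ u : ℤ → ℝ × ℝ, IsDisp1D N u →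
      d2E (EQNL N K ε φ) (yLin ε F) u u ≥
        (deriv (deriv φ) F + 4 * deriv (deriv φ) (2 * F)) * (nrm N ε (bd ε u)) ^ 2 ∧
      ((∀ ℓ : ℤ, 2 ≤ ℓ → ℓ ≤ (K : ℤ) + 1 → bd ε (bd ε u) ℓ = 0) →
        d2E (EQNL N K ε φ) (yLin ε F) u u =
          (deriv (deriv φ) F + 4 * deriv (deriv φ) (2 * F)) * (nrm N ε (bd ε u)) ^ 2) :=
  stmt_15_general N ε hε φ hφ F hF K hK2 hφ2
end
end
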